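/- Suppose R_M ⫫ (M, Y) | (X, A, R_Y), with all conditioning events having positive probability. Then P(M = m | X = x, A = a) = P(M = m | X = x, A = a, R_M = 1) · P(R_M = 1 | X = x, A = a) · [ P(R_Y = 1 | X = x, A = a, M = m, R_M = 1)/P(R_M = 1 | X = x, A = a, R_Y = 1) + P(R_Y = 0 | X = x, A = a, M = m, R_M = 1)/P(R_M = 1 | X = x, A = a, R_Y = 0) ]. -/
import Mathlib


open scoped Classical

noncomputable def Pr {Ω : Type*} [Fintype Ω] (p : Ω → ℝ) (E : Ω → Prop) : ℝ :=
  ∑ ω, if E ω then p ω else 0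

noncomputable def cPr {Ω : Type*} [Fintype Ω] (p : Ω → ℝ) (E F : Ω → Prop) : ℝ :=
  Pr p (fun ω => E ω ∧ F ω) / Pr p F

noncomputable def odds {Ω : Type*} [Fintype Ω] (p : Ω → ℝ) (E F : Ω → Prop) : ℝ :=
  cPr p E F / cPr p (fun ω => ¬ E ω) F

section helpers

variable {Ω : Type*} [Fintype Ω] (p : Ω → ℝ)

lemma Pr_congr {E F : Ω → Prop} (h : ∀ ω, E ω ↔ F ω) : Pr p E = Pr p F := by
  unfold Pr
  exact Finset.sum_congr rfl fun ω _ => by simp [h ω]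

lemma Pr_mono (hp : ∀ ω, 0 ≤ p ω) {E F : Ω → Prop} (h : ∀ ω, E ω → F ω) :
    Pr p E ≤ Pr p F := by
  refine Finset.sum_le_sum fun ω _ => ?_
  by_cases hE : E ω
  · simp [hE, h ω hE]
  · by_cases hF : F ω <;> simp [hE, hF, hp ω]

lemma Pr_split {E : Ω → Prop} (R : Ω → ℕ) (hR : ∀ ω, R ω = 0 ∨ R ω = 1) :
    Pr p E = Pr p (fun ω => E ω ∧ R ω = 0) + Pr p (fun ω => E ω ∧ R ω = 1) := by
  unfold Pr
  rw [← Finset.sum_add_distrib]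
  refine Finset.sum_congr rfl fun ω _ => ?_
  rcases hR ω with h0 | h0 <;> by_cases hE : E ω <;> simp [hE, h0]

lemma Pr_partition {β : Type*} (f : Ω → β) (E : Ω → Prop) :
    Pr p E = ∑ b ∈ Finset.univ.image f, Pr p (fun ω => f ω = b ∧ E ω) := by
  unfold Pr
  rw [Finset.sum_comm]
  refine Finset.sum_congr rfl fun ω _ => ?_
  by_cases hE : E ω
  · simp only [hE, and_true]
    rw [Finset.sum_ite_eq]
    simp [Finset.mem_image_of_mem]
  · simp [hE]

end helpers

/-- Identification of the tilting function `h` under Model S6, obtained by marginalizing the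
tilted joint distribution of `(R_Y, M)` over `R_Y`. -/
theorem S6_identification_h
    {Ω 𝒳 𝒜 ℳ 𝒴 : Type*} [Fintype Ω]
    (p : Ω → ℝ) (hp : ∀ ω, 0 ≤ p ω) (hsum : ∑ ω, p ω = 1)
    (X : Ω → 𝒳) (A : Ω → 𝒜) (M : Ω → ℳ) (Y : Ω → 𝒴) (RM RY : Ω → ℕ)
    (hRM : ∀ ω, RM ω = 0 ∨ RM ω = 1) (hRY : ∀ ω, RY ω = 0 ∨ RY ω = 1)
    -- R_M ⫫ (M, Y) ∣ (X, A, R_Y)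
    (h : ∀ (rm : ℕ) (m : ℳ) (y : 𝒴) (x : 𝒳) (a : 𝒜) (ry : ℕ),
      0 < Pr p (fun ω => M ω = m ∧ Y ω = y ∧ X ω = x ∧ A ω = a ∧ RY ω = ry) →
      cPr p (fun ω => RM ω = rm)
          (fun ω => M ω = m ∧ Y ω = y ∧ X ω = x ∧ A ω = a ∧ RY ω = ry)
        = cPr p (fun ω => RM ω = rm) (fun ω => X ω = x ∧ A ω = a ∧ RY ω = ry)) :
    ∀ (x : 𝒳) (a : 𝒜) (m : ℳ),
      (∀ s : Fin 2, 0 < Pr p (fun ω => RM ω = 1 ∧ RY ω = (s : ℕ) ∧ X ω = x ∧ A ω = a)) →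
      0 < Pr p (fun ω => RM ω = 1 ∧ M ω = m ∧ X ω = x ∧ A ω = a) →
      (∀ (m' : ℳ) (y' : 𝒴) (s : Fin 2),
        0 < Pr p (fun ω => M ω = m' ∧ Y ω = y' ∧ X ω = x ∧ A ω = a ∧ RY ω = (s : ℕ))) →
      cPr p (fun ω => M ω = m) (fun ω => X ω = x ∧ A ω = a)
        = cPr p (fun ω => M ω = m) (fun ω => X ω = x ∧ A ω = a ∧ RM ω = 1)
          * cPr p (fun ω => RM ω = 1) (fun ω => X ω = x ∧ A ω = a)
          * (cPr p (fun ω => RY ω = 1) (fun ω => X ω = x ∧ A ω = a ∧ M ω = m ∧ RM ω = 1)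
                / cPr p (fun ω => RM ω = 1) (fun ω => X ω = x ∧ A ω = a ∧ RY ω = 1)
             + cPr p (fun ω => RY ω = 0) (fun ω => X ω = x ∧ A ω = a ∧ M ω = m ∧ RM ω = 1)
                / cPr p (fun ω => RM ω = 1) (fun ω => X ω = x ∧ A ω = a ∧ RY ω = 0)) := by
  intro x a m hpos1 hpos2 hpos3
  -- positivity of the various denominators
  have hXA : 0 < Pr p (fun ω => X ω = x ∧ A ω = a) :=
    lt_of_lt_of_le (hpos1 0) (Pr_mono p hp fun ω hω => ⟨hω.2.2.1, hω.2.2.2⟩)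
  have hDR : 0 < Pr p (fun ω => X ω = x ∧ A ω = a ∧ RM ω = 1) :=
    lt_of_lt_of_le (hpos1 0) (Pr_mono p hp fun ω hω => ⟨hω.2.2.1, hω.2.2.2, hω.1⟩)
  have hQm : 0 < Pr p (fun ω => X ω = x ∧ A ω = a ∧ M ω = m ∧ RM ω = 1) :=
    lt_of_lt_of_le hpos2 (Pr_mono p hp fun ω hω => ⟨hω.2.2.1, hω.2.2.2, hω.2.1, hω.1⟩)
  have hc : ∀ s : ℕ, (∃ t : Fin 2, (t : ℕ) = s) →
      0 < cPr p (fun ω => RM ω = 1) (fun ω => X ω = x ∧ A ω = a ∧ RY ω = s) := by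
    rintro s ⟨t, rfl⟩
    have hnum : 0 < Pr p (fun ω => RM ω = 1 ∧ X ω = x ∧ A ω = a ∧ RY ω = (t : ℕ)) :=
      lt_of_lt_of_le (hpos1 t) (Pr_mono p hp fun ω hω => ⟨hω.1, hω.2.2.1, hω.2.2.2, hω.2.1⟩)
    have hden : 0 < Pr p (fun ω => X ω = x ∧ A ω = a ∧ RY ω = (t : ℕ)) :=
      lt_of_lt_of_le hnum (Pr_mono p hp fun ω hω => hω.2)
    exact div_pos hnum hden
  have hc0 : 0 < cPr p (fun ω => RM ω = 1) (fun ω => X ω = x ∧ A ω = a ∧ RY ω = 0) :=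
    hc 0 ⟨0, rfl⟩
  have hc1 : 0 < cPr p (fun ω => RM ω = 1) (fun ω => X ω = x ∧ A ω = a ∧ RY ω = 1) :=
    hc 1 ⟨1, rfl⟩
  -- key: marginalizing the independence over Y
  have key : ∀ s : ℕ, (∃ t : Fin 2, (t : ℕ) = s) →
      Pr p (fun ω => RM ω = 1 ∧ M ω = m ∧ X ω = x ∧ A ω = a ∧ RY ω = s)
        = cPr p (fun ω => RM ω = 1) (fun ω => X ω = x ∧ A ω = a ∧ RY ω = s)
          * Pr p (fun ω => M ω = m ∧ X ω = x ∧ A ω = a ∧ RY ω = s) := by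
    rintro s ⟨t, rfl⟩
    rw [Pr_partition p Y (fun ω => RM ω = 1 ∧ M ω = m ∧ X ω = x ∧ A ω = a ∧ RY ω = (t : ℕ)),
        Pr_partition p Y (fun ω => M ω = m ∧ X ω = x ∧ A ω = a ∧ RY ω = (t : ℕ)),
        Finset.mul_sum]
    refine Finset.sum_congr rfl fun y _ => ?_
    have hpy := hpos3 m y t
    have hG : Pr p (fun ω => M ω = m ∧ Y ω = y ∧ X ω = x ∧ A ω = a ∧ RY ω = (t : ℕ)) ≠ 0 :=
      ne_of_gt hpy
    have hind := h 1 m y x a (t : ℕ) hpy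
    rw [cPr, div_eq_iff hG] at hind
    calc Pr p (fun ω => Y ω = y ∧ RM ω = 1 ∧ M ω = m ∧ X ω = x ∧ A ω = a ∧ RY ω = (t : ℕ))
        = Pr p (fun ω => RM ω = 1 ∧ M ω = m ∧ Y ω = y ∧ X ω = x ∧ A ω = a ∧ RY ω = (t : ℕ)) :=
          Pr_congr p fun ω => by tauto
      _ = cPr p (fun ω => RM ω = 1) (fun ω => X ω = x ∧ A ω = a ∧ RY ω = (t : ℕ))
            * Pr p (fun ω => M ω = m ∧ Y ω = y ∧ X ω = x ∧ A ω = a ∧ RY ω = (t : ℕ)) := hind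
      _ = cPr p (fun ω => RM ω = 1) (fun ω => X ω = x ∧ A ω = a ∧ RY ω = (t : ℕ))
            * Pr p (fun ω => Y ω = y ∧ M ω = m ∧ X ω = x ∧ A ω = a ∧ RY ω = (t : ℕ)) := by
          rw [Pr_congr p (E := fun ω => M ω = m ∧ Y ω = y ∧ X ω = x ∧ A ω = a ∧ RY ω = (t : ℕ))
            (F := fun ω => Y ω = y ∧ M ω = m ∧ X ω = x ∧ A ω = a ∧ RY ω = (t : ℕ))
            (fun ω => by tauto)]
  have key0 := key 0 ⟨0, rfl⟩
  have key1 := key 1 ⟨1, rfl⟩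
  -- split the LHS numerator over RY
  have hsplit : Pr p (fun ω => M ω = m ∧ X ω = x ∧ A ω = a)
      = Pr p (fun ω => M ω = m ∧ X ω = x ∧ A ω = a ∧ RY ω = 0)
        + Pr p (fun ω => M ω = m ∧ X ω = x ∧ A ω = a ∧ RY ω = 1) := by
    rw [Pr_split p RY hRY (E := fun ω => M ω = m ∧ X ω = x ∧ A ω = a)]
    rw [Pr_congr p (E := fun ω => (M ω = m ∧ X ω = x ∧ A ω = a) ∧ RY ω = 0)
        (F := fun ω => M ω = m ∧ X ω = x ∧ A ω = a ∧ RY ω = 0) (fun ω => by tauto),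
      Pr_congr p (E := fun ω => (M ω = m ∧ X ω = x ∧ A ω = a) ∧ RY ω = 1)
        (F := fun ω => M ω = m ∧ X ω = x ∧ A ω = a ∧ RY ω = 1) (fun ω => by tauto)]
  -- rewrite all cPr's in terms of canonical Pr's
  unfold cPr
  rw [Pr_congr p (E := fun ω => M ω = m ∧ X ω = x ∧ A ω = a) (fun ω => Iff.rfl)] at hsplit ⊢
  rw [hsplit]
  rw [Pr_congr p (E := fun ω => M ω = m ∧ X ω = x ∧ A ω = a ∧ RM ω = 1)
      (F := fun ω => X ω = x ∧ A ω = a ∧ M ω = m ∧ RM ω = 1) (fun ω => by tauto),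
    Pr_congr p (E := fun ω => RM ω = 1 ∧ X ω = x ∧ A ω = a)
      (F := fun ω => X ω = x ∧ A ω = a ∧ RM ω = 1) (fun ω => by tauto),
    Pr_congr p (E := fun ω => RY ω = 1 ∧ X ω = x ∧ A ω = a ∧ M ω = m ∧ RM ω = 1)
      (F := fun ω => RM ω = 1 ∧ M ω = m ∧ X ω = x ∧ A ω = a ∧ RY ω = 1) (fun ω => by tauto),
    Pr_congr p (E := fun ω => RY ω = 0 ∧ X ω = x ∧ A ω = a ∧ M ω = m ∧ RM ω = 1)
      (F := fun ω => RM ω = 1 ∧ M ω = m ∧ X ω = x ∧ A ω = a ∧ RY ω = 0) (fun ω => by tauto),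
    Pr_congr p (E := fun ω => RM ω = 1 ∧ X ω = x ∧ A ω = a ∧ RY ω = 1)
      (F := fun ω => RM ω = 1 ∧ (X ω = x ∧ A ω = a ∧ RY ω = 1)) (fun ω => by tauto),
    Pr_congr p (E := fun ω => RM ω = 1 ∧ X ω = x ∧ A ω = a ∧ RY ω = 0)
      (F := fun ω => RM ω = 1 ∧ (X ω = x ∧ A ω = a ∧ RY ω = 0)) (fun ω => by tauto)]
  have hA0 : 0 < Pr p (fun ω => RM ω = 1 ∧ X ω = x ∧ A ω = a ∧ RY ω = 0) :=
    lt_of_lt_of_le (hpos1 0) (Pr_mono p hp fun ω hω =>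
      ⟨hω.1, hω.2.2.1, hω.2.2.2, by simpa using hω.2.1⟩)
  have hA1 : 0 < Pr p (fun ω => RM ω = 1 ∧ X ω = x ∧ A ω = a ∧ RY ω = 1) :=
    lt_of_lt_of_le (hpos1 1) (Pr_mono p hp fun ω hω =>
      ⟨hω.1, hω.2.2.1, hω.2.2.2, by simpa using hω.2.1⟩)
  have hB0 : 0 < Pr p (fun ω => X ω = x ∧ A ω = a ∧ RY ω = 0) :=
    lt_of_lt_of_le hA0 (Pr_mono p hp fun ω hω => hω.2)
  have hB1 : 0 < Pr p (fun ω => X ω = x ∧ A ω = a ∧ RY ω = 1) :=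
    lt_of_lt_of_le hA1 (Pr_mono p hp fun ω hω => hω.2)
  unfold cPr at key0 key1
  rw [key0, key1]
  field_simp [ne_of_gt hA0, ne_of_gt hA1, ne_of_gt hB0, ne_of_gt hB1,
    ne_of_gt hXA, ne_of_gt hDR, ne_of_gt hQm]
  ring
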